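/- Let 0 < y < 1 and let a > 0 with a ∉ [1−√y, 1+√y]; set φ(a) = a + ya/(a−1). Then m₃(φ(a)) = ∫ x/(φ(a)−x)² dF_y(x) = 1/((a−1)² − y). -/

import Mathlib

open MeasureTheory Real

/-- Density of the Marčenko–Pastur distribution with ratio parameter `c` (the absolutely
continuous part; it vanishes outside `[(1-√c)², (1+√c)²]`). -/
noncomputable def mpDensity (c x : ℝ) : ℝ :=
  if (1 - Real.sqrt c) ^ 2 ≤ x ∧ x ≤ (1 + Real.sqrt c) ^ 2 then
    Real.sqrt ((x - (1 - Real.sqrt c) ^ 2) * ((1 + Real.sqrt c) ^ 2 - x)) /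
      (2 * Real.pi * c * x)
  else 0

/-- The Marčenko–Pastur law with ratio parameter `c > 0`: an atom of mass `max (1 - 1/c) 0`
at `0` plus the absolutely continuous part with density `mpDensity c`.  For `c < 1` (in
particular for `c = y ∈ (0,1)`) the atom vanishes and this is the measure `F_y` with density
`(1/(2πxy))√((x-a_y)(b_y-x))` on `[a_y, b_y]`, `a_y = (1-√y)²`, `b_y = (1+√y)²`. -/
noncomputable def mpLaw (c : ℝ) : Measure ℝ :=
  ENNReal.ofReal (1 - 1 / c) • Measure.dirac 0 +
    (volume : Measure ℝ).withDensity fun x => ENNReal.ofReal (mpDensity c x)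

/-- The map `φ(a) = a + ya/(a-1)` sending a spike outside `[1-√y, 1+√y]` to the a.s. limit
of the corresponding extreme sample eigenvalue, outside the Marčenko–Pastur support. -/
noncomputable def phiSpike (y a : ℝ) : ℝ := a + y * a / (a - 1)

/-!
For `y < 1` the law `F_y` has no atom, so `m₃(λ)` equals
`(2πy)⁻¹ ∫_A^B √((x - A)(B - x)) / (λ - x)² dx` with `A = a_y`, `B = b_y`. For `λ ∉ [A, B]` an
elementary primitive evaluates this integral to
`π (|2λ - A - B| / (2√((λ - A)(λ - B))) - 1)`.
At `λ = φ(a)` one has `λ - A = (a - 1 + √y)² / (a - 1)` and `λ - B = (a - 1 - √y)² / (a - 1)`,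
so `√((λ - A)(λ - B)) = ((a - 1)² - y) / |a - 1|` and `|2λ - A - B| = 2((a - 1)² + y) / |a - 1|`,
and everything collapses to `1 / ((a - 1)² - y)`.
-/

open Set

theorem HasDerivAt.arcsin_of_one_sub_sq_eq {u : ℝ → ℝ} {u' w x : ℝ} (hu : HasDerivAt u u' x)
    (hw : 0 < w) (h : 1 - u x ^ 2 = w ^ 2) :
    HasDerivAt (fun t => arcsin (u t)) (u' / w) x := by
  have hpos : 0 < 1 - u x ^ 2 := h ▸ pow_pos hw 2
  have hne1 : u x ≠ -1 := by rintro hx; simp [hx] at hpos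
  have hne2 : u x ≠ 1 := by rintro hx; simp [hx] at hpos
  have := (hasDerivAt_arcsin hne1 hne2).comp x hu
  rwa [h, sqrt_sq hw.le, one_div_mul_eq_div] at this

section Primitive

variable {A B lam x : ℝ}

theorem hasDerivAt_sqrt_mul_sub (hx : x ∈ Ioo A B) :
    HasDerivAt (fun t => √((t - A) * (B - t)))
      ((A + B - 2 * x) / (2 * √((x - A) * (B - x)))) x := by
  have hP : 0 < (x - A) * (B - x) := mul_pos (by linarith [hx.1]) (by linarith [hx.2])
  have h : HasDerivAt (fun t => (t - A) * (B - t)) (A + B - 2 * x) x :=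
    (((hasDerivAt_id x).sub_const A).mul ((hasDerivAt_id x).const_sub B)).congr_deriv
      (by simp only [id_eq]; ring)
  exact h.sqrt hP.ne'

theorem hasDerivAt_arcsin_affine (hx : x ∈ Ioo A B) :
    HasDerivAt (fun t => arcsin ((2 * t - A - B) / (B - A))) (1 / √((x - A) * (B - x))) x := by
  have hBA : 0 < B - A := by linarith [hx.1, hx.2]
  have hP : 0 < (x - A) * (B - x) := mul_pos (by linarith [hx.1]) (by linarith [hx.2])
  have hs := sq_sqrt hP.le
  have hu : HasDerivAt (fun t => (2 * t - A - B) / (B - A)) (2 / (B - A)) x := by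
    simpa using ((((hasDerivAt_id x).const_mul 2).sub_const A).sub_const B).div_const (B - A)
  convert hu.arcsin_of_one_sub_sq_eq (w := 2 * √((x - A) * (B - x)) / (B - A)) (by positivity)
    (by field_simp; linear_combination (-4 : ℝ) * hs) using 1
  field_simp

theorem hasDerivAt_arcsin_moebius (hx : x ∈ Ioo A B) (hlam : B < lam) :
    HasDerivAt
      (fun t =>
        arcsin ((lam * (A + B) - 2 * A * B - (2 * lam - A - B) * t) / ((B - A) * (lam - t))))
      (-√((lam - A) * (lam - B)) / ((lam - x) * √((x - A) * (B - x)))) x := by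
  have hBA : 0 < B - A := by linarith [hx.1, hx.2]
  have hlx : 0 < lam - x := by linarith [hx.2]
  have hP : 0 < (x - A) * (B - x) := mul_pos (by linarith [hx.1]) (by linarith [hx.2])
  have hD : 0 < (lam - A) * (lam - B) := mul_pos (by linarith [hx.1, hx.2]) (by linarith)
  have hs := sq_sqrt hP.le
  have hd := sq_sqrt hD.le
  have hu : HasDerivAt (fun t => (lam * (A + B) - 2 * A * B - (2 * lam - A - B) * t) /
      ((B - A) * (lam - t))) (-2 * (lam - A) * (lam - B) / ((B - A) * (lam - x) ^ 2)) x := by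
    refine ((((hasDerivAt_id x).const_mul (2 * lam - A - B)).const_sub
      (lam * (A + B) - 2 * A * B)).div (((hasDerivAt_id x).const_sub lam).const_mul (B - A))
      (by positivity)).congr_deriv ?_
    simp only [id_eq]
    field_simp
    ring
  convert hu.arcsin_of_one_sub_sq_eq
    (w := 2 * √((lam - A) * (lam - B)) * √((x - A) * (B - x)) / ((B - A) * (lam - x)))
    (by positivity) (by simp only [div_pow, mul_pow, hs, hd]; field_simp; ring) using 1
  field_simp
  linear_combination -hd

/- Integrating by parts, `s / (lam - t) ^ 2` with `s = √((t - A) * (B - t))` becomes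
`(s / (lam - t))' - 1 / s + (2 * lam - A - B) / (2 * s * (lam - t))`; the last two terms have the
two arcsines below as primitives. -/
noncomputable def sqrtDivSqPrimitive (A B lam t : ℝ) : ℝ :=
  √((t - A) * (B - t)) / (lam - t)
    - (2 * lam - A - B) / (2 * √((lam - A) * (lam - B))) *
      arcsin ((lam * (A + B) - 2 * A * B - (2 * lam - A - B) * t) / ((B - A) * (lam - t)))
    - arcsin ((2 * t - A - B) / (B - A))

theorem hasDerivAt_sqrtDivSqPrimitive (hx : x ∈ Ioo A B) (hlam : B < lam) :
    HasDerivAt (sqrtDivSqPrimitive A B lam) (√((x - A) * (B - x)) / (lam - x) ^ 2) x := by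
  have hlx : 0 < lam - x := by linarith [hx.2]
  have hs : 0 < √((x - A) * (B - x)) :=
    sqrt_pos.2 (mul_pos (by linarith [hx.1]) (by linarith [hx.2]))
  have hd : 0 < √((lam - A) * (lam - B)) :=
    sqrt_pos.2 (mul_pos (by linarith [hx.1, hx.2]) (by linarith))
  refine ((((hasDerivAt_sqrt_mul_sub hx).div ((hasDerivAt_id x).const_sub lam) hlx.ne').sub
    ((hasDerivAt_arcsin_moebius hx hlam).const_mul _)).sub
    (hasDerivAt_arcsin_affine hx)).congr_deriv ?_
  simp only [id_eq]
  field_simp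
  ring

theorem continuousOn_sqrtDivSqPrimitive (hAB : A < B) (hlam : B < lam) :
    ContinuousOn (sqrtDivSqPrimitive A B lam) (Icc A B) := by
  have hne : ∀ t ∈ Icc A B, lam - t ≠ 0 := fun t ht => by linarith [ht.2]
  have hne' : ∀ t ∈ Icc A B, (B - A) * (lam - t) ≠ 0 :=
    fun t ht => mul_ne_zero (by linarith) (hne t ht)
  unfold sqrtDivSqPrimitive
  fun_prop (disch := first | assumption | (intro; linarith))

theorem sqrtDivSqPrimitive_right (hAB : A < B) (hlam : B < lam) :
    sqrtDivSqPrimitive A B lam B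
      = (2 * lam - A - B) / (2 * √((lam - A) * (lam - B))) * (π / 2) - π / 2 := by
  have hBA : B - A ≠ 0 := by linarith
  have hlB : (B - A) * (lam - B) ≠ 0 := mul_ne_zero hBA (by linarith)
  rw [sqrtDivSqPrimitive, show (2 * B - A - B) / (B - A) = 1 by field_simp; ring,
    show (lam * (A + B) - 2 * A * B - (2 * lam - A - B) * B) / ((B - A) * (lam - B)) = -1 by
      rw [div_eq_iff hlB]; ring]
  simp

theorem sqrtDivSqPrimitive_left (hAB : A < B) (hlam : B < lam) :
    sqrtDivSqPrimitive A B lam A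
      = -((2 * lam - A - B) / (2 * √((lam - A) * (lam - B))) * (π / 2)) + π / 2 := by
  have hBA : B - A ≠ 0 := by linarith
  have hlA : (B - A) * (lam - A) ≠ 0 := mul_ne_zero hBA (by linarith)
  rw [sqrtDivSqPrimitive, show (2 * A - A - B) / (B - A) = -1 by field_simp; ring,
    show (lam * (A + B) - 2 * A * B - (2 * lam - A - B) * A) / ((B - A) * (lam - A)) = 1 by
      rw [div_eq_iff hlA]; ring]
  simp

theorem integral_sqrt_div_sq_of_lt (hAB : A < B) (hlam : B < lam) :
    ∫ x in A..B, √((x - A) * (B - x)) / (lam - x) ^ 2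
      = π * ((2 * lam - A - B) / (2 * √((lam - A) * (lam - B))) - 1) := by
  have hint : IntervalIntegrable (fun x => √((x - A) * (B - x)) / (lam - x) ^ 2) volume A B := by
    refine ContinuousOn.intervalIntegrable ?_
    rw [uIcc_of_le hAB.le]
    have hne : ∀ t ∈ Icc A B, (lam - t) ^ 2 ≠ 0 :=
      fun t ht => pow_ne_zero _ (by linarith [ht.2])
    fun_prop (disch := assumption)
  rw [intervalIntegral.integral_eq_sub_of_hasDerivAt_of_le hAB.le
    (continuousOn_sqrtDivSqPrimitive hAB hlam)
    (fun x hx => hasDerivAt_sqrtDivSqPrimitive hx hlam) hint,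
    sqrtDivSqPrimitive_right hAB hlam, sqrtDivSqPrimitive_left hAB hlam]
  ring

end Primitive

theorem integral_sqrt_div_sq_of_notMem {A B lam : ℝ} (hAB : A < B) (hlam : lam ∉ Icc A B) :
    ∫ x in A..B, √((x - A) * (B - x)) / (lam - x) ^ 2
      = π * (|2 * lam - A - B| / (2 * √((lam - A) * (lam - B))) - 1) := by
  rw [mem_Icc, not_and_or, not_le, not_le] at hlam
  rcases hlam with hlam | hlam
  · -- reflect `[A, B]` through its midpoint, which moves `lam` to the right of `B`
    set f := fun x => √((x - A) * (B - x)) / ((A + B - lam) - x) ^ 2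
    calc ∫ x in A..B, √((x - A) * (B - x)) / (lam - x) ^ 2
        = ∫ x in A..B, f (A + B - x) :=
          intervalIntegral.integral_congr fun x _ => by simp only [f]; ring_nf
      _ = ∫ x in A..B, f x := by
          rw [intervalIntegral.integral_comp_sub_left, add_sub_cancel_right, add_sub_cancel_left]
      _ = _ := by
          rw [integral_sqrt_div_sq_of_lt hAB (by linarith), abs_of_neg (by linarith)]
          ring_nf
  · rw [integral_sqrt_div_sq_of_lt hAB hlam, abs_of_pos (by linarith)]

section MarchenkoPastur

variable {c x : ℝ}

theorem measurable_mpDensity (c : ℝ) : Measurable (mpDensity c) := by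
  unfold mpDensity
  exact Measurable.ite measurableSet_Icc (by fun_prop) measurable_const

theorem mpDensity_nonneg (hc : 0 ≤ c) (x : ℝ) : 0 ≤ mpDensity c x := by
  unfold mpDensity
  split_ifs with hx
  · have : 0 ≤ x := (sq_nonneg _).trans hx.1
    positivity
  · rfl

theorem mpDensity_of_mem (hx : x ∈ Icc ((1 - √c) ^ 2) ((1 + √c) ^ 2)) :
    mpDensity c x = √((x - (1 - √c) ^ 2) * ((1 + √c) ^ 2 - x)) / (2 * π * c * x) :=
  if_pos hx

theorem mpDensity_eq_zero_of_notMem (hx : x ∉ Icc ((1 - √c) ^ 2) ((1 + √c) ^ 2)) :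
    mpDensity c x = 0 :=
  if_neg hx

theorem mpLaw_eq_withDensity (hc0 : 0 < c) (hc1 : c ≤ 1) :
    mpLaw c = volume.withDensity fun x => ENNReal.ofReal (mpDensity c x) := by
  rw [mpLaw, ENNReal.ofReal_eq_zero.2 (by rw [sub_nonpos, le_div_iff₀ hc0]; linarith),
    zero_smul, zero_add]

theorem integral_mpLaw (hc0 : 0 < c) (hc1 : c ≤ 1) (f : ℝ → ℝ) :
    ∫ x, f x ∂mpLaw c = ∫ x in (1 - √c) ^ 2..(1 + √c) ^ 2, mpDensity c x * f x := by
  have hAB : (1 - √c) ^ 2 ≤ (1 + √c) ^ 2 := by nlinarith [sqrt_nonneg c]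
  rw [mpLaw_eq_withDensity hc0 hc1, integral_withDensity_eq_integral_toReal_smul
      (measurable_mpDensity c).ennreal_ofReal (by simp),
    intervalIntegral.integral_of_le hAB, ← integral_Icc_eq_integral_Ioc,
    ← integral_indicator measurableSet_Icc]
  congr 1 with x
  by_cases hx : x ∈ Icc ((1 - √c) ^ 2) ((1 + √c) ^ 2)
  · simp [indicator_of_mem hx, ENNReal.toReal_ofReal (mpDensity_nonneg hc0.le x)]
  · simp [indicator_of_notMem hx, mpDensity_eq_zero_of_notMem hx]

theorem integral_mpLaw_div_sq (hc0 : 0 < c) (hc1 : c < 1) (lam : ℝ) :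
    ∫ x, x / (lam - x) ^ 2 ∂mpLaw c = (2 * π * c)⁻¹ *
      ∫ x in (1 - √c) ^ 2..(1 + √c) ^ 2,
        √((x - (1 - √c) ^ 2) * ((1 + √c) ^ 2 - x)) / (lam - x) ^ 2 := by
  have hA : 0 < (1 - √c) ^ 2 := pow_pos (sub_pos.2 ((sqrt_lt' one_pos).2 (by rwa [one_pow]))) 2
  have hAB : (1 - √c) ^ 2 ≤ (1 + √c) ^ 2 := by nlinarith [sqrt_nonneg c]
  rw [integral_mpLaw hc0 hc1.le, ← intervalIntegral.integral_const_mul]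
  refine intervalIntegral.integral_congr fun x hx => ?_
  rw [uIcc_of_le hAB] at hx
  have hx0 : x ≠ 0 := (hA.trans_le hx.1).ne'
  rw [mpDensity_of_mem hx]
  field_simp

end MarchenkoPastur

theorem phiSpike_sub_mul_sub {y a : ℝ} (hy : 0 ≤ y) (ha : a ≠ 1) :
    (phiSpike y a - (1 - √y) ^ 2) * (phiSpike y a - (1 + √y) ^ 2)
      = (((a - 1) ^ 2 - y) / (a - 1)) ^ 2 := by
  have ha' : a - 1 ≠ 0 := sub_ne_zero.2 ha
  obtain ⟨s, hs, rfl⟩ : ∃ s, 0 ≤ s ∧ y = s ^ 2 :=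
    ⟨√y, sqrt_nonneg y, (sq_sqrt hy).symm⟩
  rw [phiSpike, sqrt_sq hs]
  field_simp
  ring

theorem two_mul_phiSpike_sub {y a : ℝ} (hy : 0 ≤ y) (ha : a ≠ 1) :
    2 * phiSpike y a - (1 - √y) ^ 2 - (1 + √y) ^ 2 = 2 * ((a - 1) ^ 2 + y) / (a - 1) := by
  have ha' : a - 1 ≠ 0 := sub_ne_zero.2 ha
  rw [phiSpike]
  field_simp
  linear_combination (-2 * (a - 1)) * sq_sqrt hy

theorem lt_sq_sub_one_of_notMem {y a : ℝ} (hy : 0 ≤ y)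
    (hout : a ∉ Icc (1 - √y) (1 + √y)) :
    y < (a - 1) ^ 2 := by
  rw [mem_Icc, not_and_or, not_le, not_le] at hout
  rw [← sq_sqrt hy, sq_lt_sq, abs_of_nonneg (sqrt_nonneg y)]
  rcases hout with h | h
  · rw [abs_of_neg (by linarith [sqrt_nonneg y])]; linarith
  · rw [abs_of_pos (by linarith [sqrt_nonneg y])]; linarith

theorem mp_m3_phi_general (y a : ℝ) (hy0 : 0 < y) (hy1 : y < 1)
    (hout : a ∉ Set.Icc (1 - Real.sqrt y) (1 + Real.sqrt y)) :
    (∫ x, x / (phiSpike y a - x) ^ 2 ∂mpLaw y) = 1 / ((a - 1) ^ 2 - y) := by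
  have hgap : 0 < (a - 1) ^ 2 - y := sub_pos.2 (lt_sq_sub_one_of_notMem hy0.le hout)
  have ha : a ≠ 1 := by rintro rfl; norm_num at hgap; linarith
  have ha' : a - 1 ≠ 0 := sub_ne_zero.2 ha
  have hAB : (1 - √y) ^ 2 < (1 + √y) ^ 2 := by nlinarith [sqrt_pos.2 hy0]
  have hprod := phiSpike_sub_mul_sub hy0.le ha
  have hphi : phiSpike y a ∉ Icc ((1 - √y) ^ 2) ((1 + √y) ^ 2) := fun h => by
    have : 0 < (((a - 1) ^ 2 - y) / (a - 1)) ^ 2 := by positivity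
    nlinarith [h.1, h.2]
  rw [integral_mpLaw_div_sq hy0 hy1, integral_sqrt_div_sq_of_notMem hAB hphi, hprod,
    two_mul_phiSpike_sub hy0.le ha, sqrt_sq_eq_abs, abs_div, abs_div,
    abs_of_pos hgap, abs_mul, abs_two, abs_of_pos (by positivity : 0 < (a - 1) ^ 2 + y)]
  have : 0 < |a - 1| := abs_pos.2 ha'
  field_simp
  ring

/-- `m₃(φ(a)) = ∫ x/(φ(a)−x)² dF_y(x) = 1/((a−1)²−y)`. -/
theorem mp_m3_phi (y a : ℝ) (hy0 : 0 < y) (hy1 : y < 1) (ha : 0 < a)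
    (hout : a ∉ Set.Icc (1 - Real.sqrt y) (1 + Real.sqrt y)) :
    (∫ x, x / (phiSpike y a - x) ^ 2 ∂mpLaw y) = 1 / ((a - 1) ^ 2 - y) :=
  mp_m3_phi_general y a hy0 hy1 hout
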